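/- arXiv:1103.4566 — 4 statements merged into one kernel-verified Lean document; each statement's English description precedes it below -/
import Mathlib

section
/- Let s₁,…,s_n ∈ ℝ^{d+1} be n ≥ 2 pairwise-distinct stations lying in the hyperplane {x_{d+1} = 0}, with powers P_i > 0, noise N ≥ 0, threshold β > 0 and path-loss exponent 2α for some real α ≥ 1. Let p₁, p₂ belong to the reception zone H₁ of s₁, with last coordinates t₁, t₂ ≥ 0, and suppose their orthogonal projections π(p₁) ≠ π(p₂) onto the hyperplane {x_{d+1} = 0} are distinct. Let u = (π(p₂) − π(p₁))/‖π(p₂) − π(p₁)‖, let q be the unique point on the line through π(p₁) and π(p₂) inside the hyperplane with ‖p₁ − q‖ = ‖p₂ − q‖, and set r = ‖p₁ − q‖. Write p_k = q + r·(cos θ_k · u + sin θ_k · e_{d+1}) with θ_k ∈ [0, π] for k = 1, 2, where e_{d+1} is the last standard basis vector. Then for every θ between θ₁ and θ₂, the point q + r·(cos θ · u + sin θ · e_{d+1}) belongs to H₁; that is, the hyperbolic geodesic arc joining p₁ and p₂ is entirely contained in H₁. -/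
open Finset

/-- SINR of station `i` at point `p`, for stations `s`, powers `P`, noise `N`
and path-loss exponent `2α`. -/
noncomputable def sinrA {m n : ℕ} (s : Fin n → EuclideanSpace ℝ (Fin m))
    (P : Fin n → ℝ) (N α : ℝ) (i : Fin n) (p : EuclideanSpace ℝ (Fin m)) : ℝ :=
  P i * dist p (s i) ^ (-(2 * α)) /
    ((∑ j ∈ Finset.univ.erase i, P j * dist p (s j) ^ (-(2 * α))) + N)

/-- The reception zone of station `i` (path-loss exponent `2α`). -/
noncomputable def recZoneA {m n : ℕ} (s : Fin n → EuclideanSpace ℝ (Fin m))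
    (P : Fin n → ℝ) (N α β : ℝ) (i : Fin n) : Set (EuclideanSpace ℝ (Fin m)) :=
  {p | p ∉ Set.range s ∧ β ≤ sinrA s P N α i p} ∪ {s i}


open Real RealInnerProductSpace

lemma star_ineq {α t p q u v : ℝ} (hα : 1 ≤ α) (hp : 0 ≤ p) (hq : 0 ≤ q)
    (hu : 0 < u) (hv : 0 < v) (ht0 : 0 ≤ t) (ht1 : t ≤ 1) :
    ((1-t)*p + t*q) ^ (α+1) * ((1-t)*u + t*v) ^ (-α) ≤
      (1-t) * (p ^ (α+1) * u ^ (-α)) + t * (q ^ (α+1) * v ^ (-α)) := by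
  have h1t : 0 ≤ 1 - t := by linarith
  set w := (1-t)*u + t*v with hwdef
  have hw : 0 < w := by
    rcases lt_or_ge t 1 with h | h
    · nlinarith
    · have : t = 1 := le_antisymm ht1 h
      simp [hwdef, this, hv]
  have hm : 0 ≤ (1-t)*p + t*q := by positivity
  have hcx := convexOn_rpow (p := α+1) (by linarith)
  have ha : (0:ℝ) ≤ (1-t)*u/w := by positivity
  have hb : (0:ℝ) ≤ t*v/w := by positivity
  have hab : (1-t)*u/w + t*v/w = 1 := by field_simp; exact hwdef.symm
  have hkey := hcx.2 (Set.mem_Ici.2 (by positivity : (0:ℝ) ≤ p/u))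
      (Set.mem_Ici.2 (by positivity : (0:ℝ) ≤ q/v)) ha hb hab
  simp only [smul_eq_mul] at hkey
  have hcomb : (1-t)*u/w * (p/u) + t*v/w * (q/v) = ((1-t)*p + t*q)/w := by
    field_simp
  rw [hcomb] at hkey
  have hkey2 := mul_le_mul_of_nonneg_right hkey hw.le
  have hwinv : w ^ (-α) = w / w^(α+1) := by
    rw [show -α = 1 - (α+1) by ring, Real.rpow_sub hw, Real.rpow_one]
  have e1 : (((1-t)*p + t*q)/w) ^ (α+1) * w = ((1-t)*p + t*q) ^ (α+1) * w ^ (-α) := by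
    rw [Real.div_rpow hm hw.le, hwinv]
    ring
  have e2 : ∀ x y : ℝ, 0 ≤ x → 0 < y → (x/y) ^ (α+1) = x ^ (α+1) * (y^(-α))/y := by
    intro x y hx hy
    have : y ^ (-α) = y / y^(α+1) := by
      rw [show -α = 1 - (α+1) by ring, Real.rpow_sub hy, Real.rpow_one]
    rw [Real.div_rpow hx hy.le, this]
    field_simp
  rw [e1, e2 p u hp hu, e2 q v hq hv] at hkey2
  calc ((1-t)*p + t*q) ^ (α+1) * w ^ (-α) ≤
      ((1-t)*u/w * (p ^ (α+1) * u ^ (-α) / u) + t*v/w * (q ^ (α+1) * v ^ (-α) / v)) * w := hkey2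
    _ = (1-t) * (p ^ (α+1) * u ^ (-α)) + t * (q ^ (α+1) * v ^ (-α)) := by
        field_simp

lemma pow2_rpow (dd α : ℝ) (hd : 0 ≤ dd) : dd ^ (-(2*α)) = (dd^2 : ℝ) ^ (-α) := by
  rw [← Real.rpow_natCast dd 2, ← Real.rpow_mul hd]
  norm_num

lemma dist_arc {F : Type*} [NormedAddCommGroup F] [InnerProductSpace ℝ F]
    (q u e sj : F) (r θ : ℝ) (hu : ‖u‖ = 1) (he : ‖e‖ = 1)
    (hue : ⟪u, e⟫ = 0) (hqe : ⟪q - sj, e⟫ = 0) :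
    dist (q + r • (Real.cos θ • u + Real.sin θ • e)) sj ^ 2
      = (‖q - sj‖^2 + r^2) + (2*r*⟪q - sj, u⟫) * Real.cos θ := by
  rw [dist_eq_norm]
  have h1 : q + r • (Real.cos θ • u + Real.sin θ • e) - sj
      = (q - sj) + ((r * Real.cos θ) • u + (r * Real.sin θ) • e) := by
    rw [smul_add, smul_smul, smul_smul]; abel
  rw [h1, norm_add_sq_real]
  have h2 : ‖(r * Real.cos θ) • u + (r * Real.sin θ) • e‖^2 = r^2 := by
    rw [norm_add_sq_real, real_inner_smul_left, real_inner_smul_right, hue,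
      norm_smul, norm_smul, hu, he]
    simp only [Real.norm_eq_abs, mul_one, mul_zero]
    rw [sq_abs, sq_abs]
    nlinarith [Real.sin_sq_add_cos_sq θ]
  have h3 : ⟪q - sj, (r * Real.cos θ) • u + (r * Real.sin θ) • e⟫
      = r * Real.cos θ * ⟪q - sj, u⟫ := by
    rw [inner_add_right, real_inner_smul_right, real_inner_smul_right, hqe]
    ring
  rw [h2, h3]
  ring

lemma endpoint_bound {m' n : ℕ} (hn : 2 ≤ n) (s : Fin n → EuclideanSpace ℝ (Fin m'))
    (P : Fin n → ℝ) (hP : ∀ j, 0 < P j) (N α β : ℝ) (hN : 0 ≤ N) (hα : 1 ≤ α)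
    (i : Fin n) (p' : EuclideanSpace ℝ (Fin m')) (hp' : p' ∈ recZoneA s P N α β i) :
    β * (dist p' (s i) ^ 2) ^ (α:ℝ) *
      ((∑ j ∈ Finset.univ.erase i, P j * ((dist p' (s j) ^ 2 : ℝ) ^ (-α))) + N) ≤ P i := by
  have hαpos : (0:ℝ) < α := by linarith
  rcases hp' with ⟨hrange, hsinr⟩ | hpi
  · have hdj : ∀ j, (0:ℝ) < dist p' (s j) := fun j => dist_pos.2 (fun h => hrange ⟨j, h.symm⟩)
    have hnt : Nontrivial (Fin n) := Fin.nontrivial_iff_two_le.2 hn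
    obtain ⟨j₀, hj₀⟩ := exists_ne i
    have hne : (Finset.univ.erase i).Nonempty :=
      ⟨j₀, Finset.mem_erase.2 ⟨hj₀, Finset.mem_univ j₀⟩⟩
    have hD : 0 < (∑ j ∈ Finset.univ.erase i, P j * dist p' (s j) ^ (-(2*α))) + N := by
      have := Finset.sum_pos
        (fun j _ => mul_pos (hP j) (Real.rpow_pos_of_pos (hdj j) (-(2*α))))
        hne
      linarith
    rw [sinrA, le_div_iff₀ hD] at hsinr
    have hconv : ∀ j, dist p' (s j) ^ (-(2*α)) = ((dist p' (s j)^2 : ℝ)) ^ (-α) :=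
      fun j => pow2_rpow _ _ dist_nonneg
    simp only [hconv] at hsinr
    have hm : (0:ℝ) < dist p' (s i)^2 := pow_pos (hdj i) 2
    calc β * (dist p' (s i) ^ 2) ^ (α:ℝ) *
          ((∑ j ∈ Finset.univ.erase i, P j * ((dist p' (s j) ^ 2 : ℝ) ^ (-α))) + N)
        = (β * ((∑ j ∈ Finset.univ.erase i, P j * ((dist p' (s j) ^ 2 : ℝ) ^ (-α))) + N))
            * (dist p' (s i) ^ 2) ^ (α:ℝ) := by ring
      _ ≤ (P i * (dist p' (s i) ^ 2 : ℝ) ^ (-α)) * (dist p' (s i) ^ 2) ^ (α:ℝ) :=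
          mul_le_mul_of_nonneg_right hsinr (Real.rpow_nonneg hm.le α)
      _ = P i := by
          rw [mul_assoc, ← Real.rpow_add hm]
          simp
  · have hpi' : p' = s i := hpi
    rw [hpi', dist_self]
    rw [show ((0:ℝ)^2 : ℝ) = 0 by norm_num, Real.zero_rpow (ne_of_gt hαpos)]
    simpa using (hP i).le


set_option maxHeartbeats 2000000 in
theorem hyperbolic_arc_in_zone {d n : ℕ} (hn : 2 ≤ n)
    (s : Fin n → EuclideanSpace ℝ (Fin (d + 1))) (hs : Function.Injective s)
    (hplane : ∀ j, s j (Fin.last d) = 0)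
    (P : Fin n → ℝ) (hP : ∀ j, 0 < P j)
    (N β α : ℝ) (hN : 0 ≤ N) (hβ : 0 < β) (hα : 1 ≤ α)
    (i : Fin n)
    (p₁ p₂ : EuclideanSpace ℝ (Fin (d + 1)))
    (hp₁ : p₁ ∈ recZoneA s P N α β i) (hp₂ : p₂ ∈ recZoneA s P N α β i)
    (ht₁ : 0 ≤ p₁ (Fin.last d)) (ht₂ : 0 ≤ p₂ (Fin.last d)) :
    -- the unit vector in the vertical direction
    let e : EuclideanSpace ℝ (Fin (d + 1)) := EuclideanSpace.single (Fin.last d) 1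
    -- orthogonal projection onto the hyperplane `x_{d+1} = 0`
    let proj : EuclideanSpace ℝ (Fin (d + 1)) → EuclideanSpace ℝ (Fin (d + 1)) :=
      fun p => p - p (Fin.last d) • e
    proj p₁ ≠ proj p₂ →
    ∀ u q : EuclideanSpace ℝ (Fin (d + 1)),
      u = ‖proj p₂ - proj p₁‖⁻¹ • (proj p₂ - proj p₁) →
      (∃ c : ℝ, q = proj p₁ + c • u) →
      dist p₁ q = dist p₂ q →
      ∀ r θ₁ θ₂ : ℝ, r = dist p₁ q →
        θ₁ ∈ Set.Icc 0 Real.pi → θ₂ ∈ Set.Icc 0 Real.pi →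
        p₁ = q + r • (Real.cos θ₁ • u + Real.sin θ₁ • e) →
        p₂ = q + r • (Real.cos θ₂ • u + Real.sin θ₂ • e) →
        ∀ θ ∈ Set.Icc (min θ₁ θ₂) (max θ₁ θ₂),
          q + r • (Real.cos θ • u + Real.sin θ • e) ∈ recZoneA s P N α β i := by
  intro e proj hproj u q hu hqdef hdq r θ₁ θ₂ hr hI1 hI2 hp1e hp2e θ hθI
  obtain ⟨cq, hqq⟩ := hqdef
  obtain ⟨hθ₁0, hθ₁π⟩ := hI1
  obtain ⟨hθ₂0, hθ₂π⟩ := hI2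
  obtain ⟨hθlo, hθhi⟩ := hθI
  -- trivial endpoint cases
  rcases eq_or_ne θ θ₁ with rfl | hne1
  · rw [← hp1e]; exact hp₁
  rcases eq_or_ne θ θ₂ with rfl | hne2
  · rw [← hp2e]; exact hp₂
  -- basic coordinate facts
  have he_last : e (Fin.last d) = 1 := by
    simp [e, EuclideanSpace.single_apply]
  have hproj_last : ∀ x : EuclideanSpace ℝ (Fin (d+1)), proj x (Fin.last d) = 0 := by
    intro x
    simp [proj, PiLp.sub_apply, PiLp.smul_apply, he_last, smul_eq_mul]
  have hw_ne : proj p₂ - proj p₁ ≠ 0 := sub_ne_zero_of_ne (Ne.symm hproj)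
  have hw_norm_ne : ‖proj p₂ - proj p₁‖ ≠ 0 := norm_ne_zero_iff.2 hw_ne
  have hu_norm : ‖u‖ = 1 := by
    rw [hu, norm_smul, norm_inv, norm_norm]
    field_simp
  have hu_last : u (Fin.last d) = 0 := by
    rw [hu]
    simp [PiLp.smul_apply, PiLp.sub_apply, hproj_last, smul_eq_mul]
  have hq_last : q (Fin.last d) = 0 := by
    rw [hqq]
    simp [PiLp.add_apply, PiLp.smul_apply, hproj_last, hu_last, smul_eq_mul]
  have he_norm : ‖e‖ = 1 := by
    simp [e, EuclideanSpace.norm_single]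
  have hue : ⟪u, e⟫ = 0 := by
    simp only [e, EuclideanSpace.inner_single_right]
    simp [hu_last]
  have hqse : ∀ j : Fin n, ⟪q - s j, e⟫ = 0 := by
    intro j
    simp only [e, EuclideanSpace.inner_single_right]
    simp [PiLp.sub_apply, hq_last, hplane j]
  have hdarc : ∀ (j : Fin n) (θ' : ℝ),
      dist (q + r • (Real.cos θ' • u + Real.sin θ' • e)) (s j) ^ 2
        = (‖q - s j‖^2 + r^2) + (2*r*⟪q - s j, u⟫) * Real.cos θ' :=
    fun j θ' => dist_arc q u e (s j) r θ' hu_norm he_norm hue (hqse j)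
  -- distinctness of the two endpoints
  have hp12 : p₁ ≠ p₂ := fun h => hproj (congrArg proj h)
  have hθ12 : θ₁ ≠ θ₂ := by
    intro h
    exact hp12 (by rw [hp1e, hp2e, h])
  -- r > 0
  have hr0 : 0 ≤ r := hr ▸ dist_nonneg
  have hrpos : 0 < r := by
    rcases hr0.lt_or_eq with h | h
    · exact h
    · exfalso
      have h1 : p₁ = q := by
        have : dist p₁ q = 0 := by rw [← hr, ← h]
        exact dist_eq_zero.1 this
      have h2 : p₂ = q := by
        have : dist p₂ q = 0 := by rw [← hdq, ← hr, ← h]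
        exact dist_eq_zero.1 this
      exact hp12 (h1.trans h2.symm)
  -- θ strictly interior
  have hθpos : 0 < θ := by
    have hmin0 : 0 ≤ min θ₁ θ₂ := le_min hθ₁0 hθ₂0
    have : min θ₁ θ₂ ≠ θ := by
      rcases min_choice θ₁ θ₂ with h | h <;> rw [h]
      · exact fun hh => hne1 hh.symm
      · exact fun hh => hne2 hh.symm
    exact hmin0.trans_lt (lt_of_le_of_ne hθlo this)
  have hθltπ : θ < Real.pi := by
    have hmaxπ : max θ₁ θ₂ ≤ Real.pi := max_le hθ₁π hθ₂π
    have : θ ≠ max θ₁ θ₂ := by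
      rcases max_choice θ₁ θ₂ with h | h <;> rw [h]
      · exact hne1
      · exact hne2
    exact (lt_of_le_of_ne hθhi this).trans_le hmaxπ
  have hsinθ : 0 < Real.sin θ := Real.sin_pos_of_pos_of_lt_pi hθpos hθltπ
  -- the arc point
  set z := q + r • (Real.cos θ • u + Real.sin θ • e) with hz
  have hz_last : z (Fin.last d) = r * Real.sin θ := by
    rw [hz]
    simp [PiLp.add_apply, PiLp.smul_apply, hq_last, hu_last, he_last, smul_eq_mul]
  have hzs : ∀ j : Fin n, z ≠ s j := by
    intro j h
    have h0 := hplane j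
    rw [← h, hz_last] at h0
    nlinarith
  have hz_range : z ∉ Set.range s := fun ⟨j, hj⟩ => hzs j hj.symm
  -- interpolation parameter
  have hc12 : Real.cos θ₁ ≠ Real.cos θ₂ :=
    fun h => hθ12 (Real.injOn_cos ⟨hθ₁0, hθ₁π⟩ ⟨hθ₂0, hθ₂π⟩ h)
  obtain ⟨t, ht0, ht1, hct⟩ :
      ∃ t : ℝ, 0 ≤ t ∧ t ≤ 1 ∧ Real.cos θ = (1-t)*Real.cos θ₁ + t*Real.cos θ₂ := by
    rcases lt_or_gt_of_ne hθ12 with hlt | hlt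
    · have hmin : min θ₁ θ₂ = θ₁ := min_eq_left hlt.le
      have hmax : max θ₁ θ₂ = θ₂ := max_eq_right hlt.le
      have h1 : θ₁ ≤ θ := hmin ▸ hθlo
      have h2 : θ ≤ θ₂ := hmax ▸ hθhi
      have hcle1 : Real.cos θ ≤ Real.cos θ₁ :=
        Real.cos_le_cos_of_nonneg_of_le_pi hθ₁0 hθltπ.le h1
      have hcle2 : Real.cos θ₂ ≤ Real.cos θ :=
        Real.cos_le_cos_of_nonneg_of_le_pi hθpos.le hθ₂π h2
      have hden : Real.cos θ₂ - Real.cos θ₁ < 0 := by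
        rcases lt_or_eq_of_le (hcle2.trans hcle1) with h | h
        · linarith
        · exact absurd h.symm hc12
      refine ⟨(Real.cos θ - Real.cos θ₁)/(Real.cos θ₂ - Real.cos θ₁), ?_, ?_, ?_⟩
      · exact div_nonneg_iff.2 (Or.inr ⟨by linarith, hden.le⟩)
      · rw [div_le_one_iff]
        right; right; exact ⟨hden, by linarith⟩
      · have hmul : (Real.cos θ - Real.cos θ₁)/(Real.cos θ₂ - Real.cos θ₁)
            * (Real.cos θ₂ - Real.cos θ₁) = Real.cos θ - Real.cos θ₁ :=
          div_mul_cancel₀ _ (by linarith)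
        linarith [hmul]
    · have hmin : min θ₁ θ₂ = θ₂ := min_eq_right hlt.le
      have hmax : max θ₁ θ₂ = θ₁ := max_eq_left hlt.le
      have h1 : θ₂ ≤ θ := hmin ▸ hθlo
      have h2 : θ ≤ θ₁ := hmax ▸ hθhi
      have hcle1 : Real.cos θ₁ ≤ Real.cos θ :=
        Real.cos_le_cos_of_nonneg_of_le_pi hθpos.le hθ₁π h2
      have hcle2 : Real.cos θ ≤ Real.cos θ₂ :=
        Real.cos_le_cos_of_nonneg_of_le_pi hθ₂0 hθltπ.le h1
      have hden : 0 < Real.cos θ₂ - Real.cos θ₁ := by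
        rcases lt_or_eq_of_le (hcle1.trans hcle2) with h | h
        · linarith
        · exact absurd h hc12
      refine ⟨(Real.cos θ - Real.cos θ₁)/(Real.cos θ₂ - Real.cos θ₁), ?_, ?_, ?_⟩
      · exact div_nonneg (by linarith) hden.le
      · rw [div_le_one hden]
        linarith
      · have hmul : (Real.cos θ - Real.cos θ₁)/(Real.cos θ₂ - Real.cos θ₁)
            * (Real.cos θ₂ - Real.cos θ₁) = Real.cos θ - Real.cos θ₁ :=
          div_mul_cancel₀ _ (by linarith)
        linarith [hmul]
  -- squared distances interpolate affinely
  have hcomb : ∀ j : Fin n,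
      dist z (s j)^2 = (1-t) * dist p₁ (s j)^2 + t * dist p₂ (s j)^2 := by
    intro j
    rw [hz, hp1e, hp2e, hdarc j θ, hdarc j θ₁, hdarc j θ₂, hct]
    ring
  -- positivity of distances to other stations at the endpoints
  have hzonepos : ∀ p' : EuclideanSpace ℝ (Fin (d+1)), p' ∈ recZoneA s P N α β i →
      ∀ j, j ≠ i → 0 < dist p' (s j) := by
    rintro p' hp' j hj
    rcases hp' with ⟨hrange, -⟩ | hpi
    · exact dist_pos.2 (fun h => hrange ⟨j, h.symm⟩)
    · have hpi' : p' = s i := hpi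
      rw [hpi']
      exact dist_pos.2 (fun h => hj (hs h).symm)
  have hMpos : (0:ℝ) < dist z (s i)^2 := pow_pos (dist_pos.2 (hzs i)) 2
  have hb1 := endpoint_bound hn s P hP N α β hN hα i p₁ hp₁
  have hb2 := endpoint_bound hn s P hP N α β hN hα i p₂ hp₂
  have h1t : (0:ℝ) ≤ 1 - t := by linarith
  -- per-station convexity bound
  have hstarj : ∀ j, j ≠ i →
      (dist z (s i)^2) ^ (α+1) * (dist z (s j)^2) ^ (-α)
        ≤ (1-t) * ((dist p₁ (s i)^2) ^ (α+1) * (dist p₁ (s j)^2) ^ (-α))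
          + t * ((dist p₂ (s i)^2) ^ (α+1) * (dist p₂ (s j)^2) ^ (-α)) := by
    intro j hj
    rw [hcomb i, hcomb j]
    exact star_ineq hα (by positivity) (by positivity)
      (pow_pos (hzonepos p₁ hp₁ j hj) 2) (pow_pos (hzonepos p₂ hp₂ j hj) 2) ht0 ht1
  have hstarN : (dist z (s i)^2) ^ (α+1)
      ≤ (1-t) * (dist p₁ (s i)^2) ^ (α+1) + t * (dist p₂ (s i)^2) ^ (α+1) := by
    have h := star_ineq (u := 1) (v := 1) (t := t) hα
      (by positivity : (0:ℝ) ≤ dist p₁ (s i)^2) (by positivity : (0:ℝ) ≤ dist p₂ (s i)^2)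
      one_pos one_pos ht0 ht1
    rw [show (1-t)*(1:ℝ) + t*1 = 1 by ring, Real.one_rpow] at h
    rw [hcomb i]
    simpa using h
  -- the key inequality at z
  have hkey : β * ((dist z (s i)^2) ^ α) *
      ((∑ j ∈ Finset.univ.erase i, P j * ((dist z (s j)^2 : ℝ) ^ (-α))) + N) ≤ P i := by
    rw [← mul_le_mul_iff_right₀ hMpos]
    have hM1 : dist z (s i)^2 * (β * ((dist z (s i)^2) ^ α) *
        ((∑ j ∈ Finset.univ.erase i, P j * ((dist z (s j)^2 : ℝ) ^ (-α))) + N))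
        = β * ((dist z (s i)^2) ^ (α+1)) *
          ((∑ j ∈ Finset.univ.erase i, P j * ((dist z (s j)^2 : ℝ) ^ (-α))) + N) := by
      rw [Real.rpow_add_one hMpos.ne' α]; ring
    rw [hM1]
    have e1 : (dist p₁ (s i)^2 : ℝ) ^ (α+1) = (dist p₁ (s i)^2) ^ α * (dist p₁ (s i)^2) := by
      rw [Real.rpow_add' (by positivity) (by linarith : α + 1 ≠ 0), Real.rpow_one]
    have e2 : (dist p₂ (s i)^2 : ℝ) ^ (α+1) = (dist p₂ (s i)^2) ^ α * (dist p₂ (s i)^2) := by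
      rw [Real.rpow_add' (by positivity) (by linarith : α + 1 ≠ 0), Real.rpow_one]
    calc β * ((dist z (s i)^2) ^ (α+1)) *
          ((∑ j ∈ Finset.univ.erase i, P j * ((dist z (s j)^2 : ℝ) ^ (-α))) + N)
        = (∑ j ∈ Finset.univ.erase i, β * P j *
            ((dist z (s i)^2) ^ (α+1) * (dist z (s j)^2 : ℝ) ^ (-α)))
          + β * N * (dist z (s i)^2) ^ (α+1) := by
          rw [mul_add, Finset.mul_sum]
          congr 1
          · exact Finset.sum_congr rfl (fun j _ => by ring)
          · ring
      _ ≤ (∑ j ∈ Finset.univ.erase i, β * P j *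
            ((1-t) * ((dist p₁ (s i)^2) ^ (α+1) * (dist p₁ (s j)^2 : ℝ) ^ (-α))
              + t * ((dist p₂ (s i)^2) ^ (α+1) * (dist p₂ (s j)^2 : ℝ) ^ (-α))))
          + β * N * ((1-t) * (dist p₁ (s i)^2) ^ (α+1) + t * (dist p₂ (s i)^2) ^ (α+1)) := by
          refine add_le_add (Finset.sum_le_sum fun j hj => ?_)
            (mul_le_mul_of_nonneg_left hstarN (mul_nonneg hβ.le hN))
          exact mul_le_mul_of_nonneg_left (hstarj j (Finset.mem_erase.1 hj).1) (mul_nonneg hβ.le (hP j).le)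
      _ = (1-t) * ((dist p₁ (s i)^2) * (β * ((dist p₁ (s i)^2) ^ α) *
            ((∑ j ∈ Finset.univ.erase i, P j * ((dist p₁ (s j)^2 : ℝ) ^ (-α))) + N)))
          + t * ((dist p₂ (s i)^2) * (β * ((dist p₂ (s i)^2) ^ α) *
            ((∑ j ∈ Finset.univ.erase i, P j * ((dist p₂ (s j)^2 : ℝ) ^ (-α))) + N))) := by
          rw [e1, e2]
          simp only [mul_add, add_mul, Finset.sum_add_distrib, Finset.mul_sum]
          rw [Finset.sum_congr rfl (fun j _ => show
              β * P j * ((1-t) * ((dist p₁ (s i)^2) ^ α * (dist p₁ (s i)^2) * (dist p₁ (s j)^2 : ℝ) ^ (-α)))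
              = (1-t) * ((dist p₁ (s i)^2) * (β * (dist p₁ (s i)^2) ^ α * (P j * (dist p₁ (s j)^2 : ℝ) ^ (-α)))) by ring)]
          rw [Finset.sum_congr rfl (fun j _ => show
              β * P j * (t * ((dist p₂ (s i)^2) ^ α * (dist p₂ (s i)^2) * (dist p₂ (s j)^2 : ℝ) ^ (-α)))
              = t * ((dist p₂ (s i)^2) * (β * (dist p₂ (s i)^2) ^ α * (P j * (dist p₂ (s j)^2 : ℝ) ^ (-α)))) by ring)]
          rw [← Finset.mul_sum, ← Finset.mul_sum, ← Finset.mul_sum, ← Finset.mul_sum]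
          ring
      _ ≤ (1-t) * ((dist p₁ (s i)^2) * P i) + t * ((dist p₂ (s i)^2) * P i) := by
          refine add_le_add ?_ ?_
          · exact mul_le_mul_of_nonneg_left
              (mul_le_mul_of_nonneg_left hb1 (by positivity)) h1t
          · exact mul_le_mul_of_nonneg_left
              (mul_le_mul_of_nonneg_left hb2 (by positivity)) ht0
      _ = dist z (s i)^2 * P i := by
          rw [hcomb i]; ring
  -- assemble the SINR bound at z
  have hnt : Nontrivial (Fin n) := Fin.nontrivial_iff_two_le.2 hn
  obtain ⟨j₀, hj₀⟩ := exists_ne i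
  have hneE : (Finset.univ.erase i).Nonempty :=
    ⟨j₀, Finset.mem_erase.2 ⟨hj₀, Finset.mem_univ j₀⟩⟩
  have hDzpos : 0 < (∑ j ∈ Finset.univ.erase i, P j * dist z (s j) ^ (-(2*α))) + N := by
    have := Finset.sum_pos
      (fun j _ => mul_pos (hP j)
        (Real.rpow_pos_of_pos (dist_pos.2 (hzs j)) (-(2*α)))) hneE
    linarith
  have hsinrz : β ≤ sinrA s P N α i z := by
    rw [sinrA, le_div_iff₀ hDzpos]
    have hconvz : ∀ j, dist z (s j) ^ (-(2*α)) = ((dist z (s j)^2 : ℝ)) ^ (-α) :=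
      fun j => pow2_rpow _ _ dist_nonneg
    simp only [hconvz]
    have h2 : β * ((∑ j ∈ Finset.univ.erase i, P j * ((dist z (s j)^2 : ℝ) ^ (-α))) + N)
        = (β * ((dist z (s i)^2) ^ α) *
            ((∑ j ∈ Finset.univ.erase i, P j * ((dist z (s j)^2 : ℝ) ^ (-α))) + N))
          * (dist z (s i)^2) ^ (-α) := by
      rw [show (β * ((dist z (s i)^2) ^ α) *
            ((∑ j ∈ Finset.univ.erase i, P j * ((dist z (s j)^2 : ℝ) ^ (-α))) + N))
          * (dist z (s i)^2) ^ (-α)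
          = β * ((∑ j ∈ Finset.univ.erase i, P j * ((dist z (s j)^2 : ℝ) ^ (-α))) + N)
            * ((dist z (s i)^2) ^ α * (dist z (s i)^2) ^ (-α)) by ring,
        ← Real.rpow_add hMpos]
      simp
    rw [h2]
    exact mul_le_mul_of_nonneg_right hkey (Real.rpow_nonneg hMpos.le _)
  exact Or.inl ⟨hz_range, hsinrz⟩
end

section
/- Let s₁,…,s_n ∈ ℝ^{d+1} be n ≥ 2 pairwise-distinct stations lying in the hyperplane {x_{d+1} = 0}, with powers P_i > 0, noise N ≥ 0, threshold β > 0 and path-loss exponent 2α for some real α ≥ 1, and let H_i ⊆ ℝ^{d+1} be the reception zone of s_i. Let C ⊆ ℝ^{d+1} be a nonempty compact set contained in the open half-space {x ∈ ℝ^{d+1} : x_{d+1} > 0}, and let ∂C denote its frontier. Then: (a) if ∂C ⊆ H_i, then C ⊆ H_i; and (b) if ∂C ∩ H_i = ∅, then C ∩ H_i = ∅. -/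
open Finset

open EuclideanGeometry

section Aux

variable {d : ℕ}

/-- Coordinates of an inversion with radius 1. -/
lemma inv_apply_one {m : ℕ} (c x : EuclideanSpace ℝ (Fin m)) (k : Fin m) :
    inversion c 1 x k = (1 / dist x c)^2 * (x k - c k) + c k := by
  simp [inversion, vsub_eq_sub, vadd_eq_add]

/-- Distance is monotone in the last coordinate, for base points on the plane. -/
lemma dist_mono_last {q q' y : EuclideanSpace ℝ (Fin (d+1))}
    (hy : y (Fin.last d) = 0)
    (hhoriz : ∀ k, k ≠ Fin.last d → q' k = q k)
    (h0 : 0 ≤ q (Fin.last d)) (hle : q (Fin.last d) ≤ q' (Fin.last d)) :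
    dist q y ≤ dist q' y := by
  rw [EuclideanSpace.dist_eq q y, EuclideanSpace.dist_eq q' y]
  apply Real.sqrt_le_sqrt
  apply Finset.sum_le_sum
  intro k _
  rcases eq_or_ne k (Fin.last d) with rfl | hk
  · rw [hy, Real.dist_eq, Real.dist_eq, sub_zero, sub_zero, sq_abs, sq_abs]
    exact pow_le_pow_left₀ h0 hle 2
  · rw [hhoriz k hk]

/-- The vertical line through `q` (varying the last coordinate). -/
noncomputable def vline (q : EuclideanSpace ℝ (Fin (d+1))) (t : ℝ) :
    EuclideanSpace ℝ (Fin (d+1)) :=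
  WithLp.toLp 2 (Function.update q (Fin.last d) t)

lemma vline_last (q : EuclideanSpace ℝ (Fin (d+1))) (t : ℝ) :
    vline q t (Fin.last d) = t := by simp [vline]

lemma vline_ne (q : EuclideanSpace ℝ (Fin (d+1))) (t : ℝ) {k : Fin (d+1)}
    (hk : k ≠ Fin.last d) : vline q t k = q k := by simp [vline, hk]

lemma dist_vline (q : EuclideanSpace ℝ (Fin (d+1))) (t t' : ℝ) :
    dist (vline q t) (vline q t') = dist t t' := by
  rw [EuclideanSpace.dist_eq (vline q t) (vline q t')]
  rw [Finset.sum_eq_single (Fin.last d)]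
  · simp [vline_last, Real.sqrt_sq dist_nonneg]
  · intro k _ hk
    simp [vline_ne q _ hk]
  · simp

/-- From a point of a compact set one can move vertically (up or down) to a frontier point. -/
lemma exists_frontier_vert {C : Set (EuclideanSpace ℝ (Fin (d+1)))} (hC : IsCompact C)
    {q : EuclideanSpace ℝ (Fin (d+1))} (hq : q ∈ C) (up : Bool) :
    ∃ y ∈ frontier C, (∀ k, k ≠ Fin.last d → y k = q k) ∧
      (if up then q (Fin.last d) ≤ y (Fin.last d) else y (Fin.last d) ≤ q (Fin.last d)) := by
  have hde : ∀ t t', dist (vline q t) (vline q t') = dist t t' := dist_vline q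
  have hec : Continuous (vline q) := (Isometry.of_dist_eq hde).continuous
  have heq : vline q (q (Fin.last d)) = q := by simp [vline]
  set L : Set ℝ := vline q ⁻¹' C with hL
  have hLc : IsClosed L := hC.isClosed.preimage hec
  have hqj : q (Fin.last d) ∈ L := by show vline q (q (Fin.last d)) ∈ C; rw [heq]; exact hq
  have hLne : L.Nonempty := ⟨q (Fin.last d), hqj⟩
  have hLb : Bornology.IsBounded L := by
    obtain ⟨r, hr⟩ := hC.isBounded.subset_closedBall q
    apply Bornology.IsBounded.subset (Metric.isBounded_closedBall (x := q (Fin.last d)) (r := r))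
    intro t ht
    have h1 : dist (vline q t) (vline q (q (Fin.last d))) ≤ r := by rw [heq]; exact hr ht
    rw [hde] at h1
    exact h1
  have hLcomp : IsCompact L := Metric.isCompact_of_isClosed_isBounded hLc hLb
  have key : ∀ T, vline q T ∈ C → (∀ t ∈ L, (if up then t ≤ T else T ≤ t)) →
      vline q T ∈ frontier C := by
    intro T hT hmax
    rw [frontier, hC.isClosed.closure_eq]
    refine ⟨hT, fun hint => ?_⟩
    rw [mem_interior_iff_mem_nhds, Metric.mem_nhds_iff] at hint
    obtain ⟨ε, hε, hball⟩ := hint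
    have hd : ∀ δ : ℝ, |δ| < ε → (T + δ) ∈ L := by
      intro δ hδ
      apply hball
      rw [Metric.mem_ball, hde]
      simpa using hδ
    cases up with
    | true =>
      have := hmax (T + ε/2) (hd (ε/2) (by rw [abs_of_pos (by linarith)]; linarith))
      simp at this; linarith
    | false =>
      have := hmax (T + (-(ε/2)))
        (hd (-(ε/2)) (by rw [abs_neg, abs_of_pos (by linarith)]; linarith))
      simp at this; linarith
  cases up with
  | true =>
    obtain ⟨T, hTL, hTg⟩ := hLcomp.exists_isGreatest hLne
    refine ⟨vline q T, key T hTL (by intro t ht; simpa using hTg ht), ?_, ?_⟩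
    · intro k hk; exact vline_ne q _ hk
    · simpa [vline_last] using hTg hqj
  | false =>
    obtain ⟨T, hTL, hTg⟩ := hLcomp.exists_isLeast hLne
    refine ⟨vline q T, key T hTL (by intro t ht; simpa using hTg ht), ?_, ?_⟩
    · intro k hk; exact vline_ne q _ hk
    · simpa [vline_last] using hTg hqj

/-- The inverted interference potential. -/
noncomputable def phiA {d n : ℕ} (s : Fin n → EuclideanSpace ℝ (Fin (d+1)))
    (P : Fin n → ℝ) (N α β : ℝ) (i : Fin n) (q : EuclideanSpace ℝ (Fin (d+1))) : ℝ :=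
  β * ((∑ j ∈ Finset.univ.erase i, (P j * dist (s i) (s j) ^ (-(2*α))) *
      dist q (inversion (s i) 1 (s j)) ^ (-(2*α))) + N * dist q (s i) ^ (-(2*α)))

/-- A point of a compact set mapped by inversion whose image is on the frontier of the image
comes from the frontier. -/
lemma frontier_inv {C : Set (EuclideanSpace ℝ (Fin (d+1)))} (hC : IsCompact C)
    {c : EuclideanSpace ℝ (Fin (d+1))} (hc : ∀ p ∈ C, p ≠ c)
    {y : EuclideanSpace ℝ (Fin (d+1))}
    (hy : y ∈ frontier (inversion c 1 '' C)) (hyc : y ≠ c) :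
    inversion c 1 y ∈ frontier C := by
  have hcont : ContinuousOn (inversion c 1) C :=
    ContinuousOn.inversion continuousOn_const continuousOn_const continuousOn_id hc
  have hC' : IsCompact (inversion c 1 '' C) := hC.image_of_continuousOn hcont
  have hyC' : y ∈ inversion c 1 '' C := by
    have := hy.1
    rwa [hC'.isClosed.closure_eq] at this
  obtain ⟨x, hxC, hxy⟩ := hyC'
  have hinv : inversion c 1 y = x := by
    rw [← hxy, inversion_inversion c one_ne_zero x]
  rw [hinv]
  rw [frontier, hC.isClosed.closure_eq]
  refine ⟨hxC, fun hint => ?_⟩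
  -- derive that y is in the interior of the image, contradiction
  apply hy.2
  have hcy : ContinuousAt (inversion c 1) y :=
    ContinuousAt.inversion continuousAt_const continuousAt_const continuousAt_id hyc
  have hV : (interior C ∩ {z | z ≠ c}) ∈ nhds (inversion c 1 y) := by
    rw [hinv]
    exact Filter.inter_mem (isOpen_interior.mem_nhds hint)
      ((isOpen_compl_singleton).mem_nhds (hc x hxC))
  have hW : (inversion c 1 ⁻¹' (interior C ∩ {z | z ≠ c}) ∩ {z | z ≠ c}) ∈ nhds y :=
    Filter.inter_mem (hcy.preimage_mem_nhds hV) ((isOpen_compl_singleton).mem_nhds hyc)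
  apply mem_interior_iff_mem_nhds.2
  apply Filter.mem_of_superset hW
  rintro z ⟨⟨hz1, _⟩, hz2⟩
  exact ⟨inversion c 1 z, interior_subset hz1,
    inversion_inversion c one_ne_zero z⟩

end Aux

section Main

variable {d n : ℕ} (s : Fin n → EuclideanSpace ℝ (Fin (d + 1)))
    (P : Fin n → ℝ) (N β α : ℝ) (i : Fin n)

/-- Membership in the reception zone, for points strictly above the plane, is equivalent to
a potential inequality at the inverted point. -/
lemma mem_recZone_iff_phi (hn : 2 ≤ n) (hs : Function.Injective s)
    (hplane : ∀ j, s j (Fin.last d) = 0) (hP : ∀ j, 0 < P j)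
    (hN : 0 ≤ N) (hβ : 0 < β) (hα : 1 ≤ α)
    {p : EuclideanSpace ℝ (Fin (d + 1))} (hp : 0 < p (Fin.last d)) :
    p ∈ recZoneA s P N α β i ↔ phiA s P N α β i (inversion (s i) 1 p) ≤ P i := by
  have hps : ∀ j, p ≠ s j := by
    intro j h
    rw [h, hplane j] at hp
    exact lt_irrefl 0 hp
  have hnr : p ∉ Set.range s := by rintro ⟨j, rfl⟩; exact hps j rfl
  have hdj : ∀ j, 0 < dist p (s j) := fun j => dist_pos.2 (hps j)
  set e := -(2*α) with he
  have hα0 : 0 < 2*α := by linarith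
  have he0 : e ≤ 0 := by rw [he]; linarith
  have ha : (0:ℝ) < dist p (s i) ^ e := Real.rpow_pos_of_pos (hdj i) e
  -- the denominator is positive
  have hne : (Finset.univ.erase i).Nonempty := by
    have h1 : 1 ≤ (Finset.univ.erase i).card := by
      rw [Finset.card_erase_of_mem (Finset.mem_univ i), Finset.card_univ, Fintype.card_fin]
      omega
    exact Finset.card_pos.1 (by omega)
  have hD : 0 < (∑ j ∈ Finset.univ.erase i, P j * dist p (s j) ^ e) + N := by
    have hsum : 0 < ∑ j ∈ Finset.univ.erase i, P j * dist p (s j) ^ e := by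
      apply Finset.sum_pos
      · intro j _
        exact mul_pos (hP j) (Real.rpow_pos_of_pos (hdj j) e)
      · exact hne
    linarith
  -- membership reduces to the inequality on products
  have hmem : p ∈ recZoneA s P N α β i ↔
      β * ((∑ j ∈ Finset.univ.erase i, P j * dist p (s j) ^ e) + N) ≤
        P i * dist p (s i) ^ e := by
    rw [recZoneA, Set.mem_union, Set.mem_singleton_iff]
    constructor
    · rintro (⟨-, h⟩ | h)
      · rw [sinrA, le_div_iff₀ hD] at h
        exact h
      · exact absurd h (hps i)
    · intro h
      exact Or.inl ⟨hnr, by rw [sinrA, le_div_iff₀ hD]; exact h⟩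
  -- key algebraic identity
  have hterm : ∀ j ∈ Finset.univ.erase i,
      (P j * dist (s i) (s j) ^ e) * dist (inversion (s i) 1 p) (inversion (s i) 1 (s j)) ^ e
        * dist p (s i) ^ e = P j * dist p (s j) ^ e := by
    intro j hj
    have hji : s j ≠ s i := fun h => (Finset.ne_of_mem_erase hj) (hs h)
    have hbi : 0 < dist (s j) (s i) := dist_pos.2 hji
    have hb : (0:ℝ) < dist (s j) (s i) ^ e := Real.rpow_pos_of_pos hbi e
    have hd1 : dist (inversion (s i) 1 p) (inversion (s i) 1 (s j)) =
        1^2 / (dist p (s i) * dist (s j) (s i)) * dist p (s j) :=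
      dist_inversion_inversion (hps i) hji 1
    rw [hd1, one_pow, div_mul_eq_mul_div, one_mul,
      Real.div_rpow dist_nonneg (by positivity),
      Real.mul_rpow dist_nonneg dist_nonneg, dist_comm (s i) (s j)]
    field_simp
  have hqsi : dist (inversion (s i) 1 p) (s i) ^ e * dist p (s i) ^ e = 1 := by
    rw [dist_inversion_center, one_pow, one_div,
      Real.inv_rpow dist_nonneg, inv_mul_cancel₀ (ne_of_gt ha)]
  have hkey : phiA s P N α β i (inversion (s i) 1 p) * dist p (s i) ^ e =
      β * ((∑ j ∈ Finset.univ.erase i, P j * dist p (s j) ^ e) + N) := by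
    rw [phiA]
    rw [mul_assoc β _ _, add_mul, Finset.sum_mul]
    congr 2
    · exact Finset.sum_congr rfl hterm
    · rw [mul_assoc, hqsi, mul_one]
  rw [hmem, ← hkey]
  exact mul_le_mul_iff_of_pos_right ha
/-- `phiA` is antitone in the last coordinate. -/
lemma phiA_antitone (hplane : ∀ j, s j (Fin.last d) = 0) (hP : ∀ j, 0 < P j)
    (hN : 0 ≤ N) (hβ : 0 < β) (hα : 1 ≤ α)
    {q q' : EuclideanSpace ℝ (Fin (d + 1))}
    (hhoriz : ∀ k, k ≠ Fin.last d → q' k = q k)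
    (h0 : 0 < q (Fin.last d)) (hle : q (Fin.last d) ≤ q' (Fin.last d)) :
    phiA s P N α β i q' ≤ phiA s P N α β i q := by
  set e := -(2*α) with he
  have he0 : e ≤ 0 := by rw [he]; linarith
  have hmono : ∀ y : EuclideanSpace ℝ (Fin (d+1)), y (Fin.last d) = 0 →
      dist q' y ^ e ≤ dist q y ^ e := by
    intro y hy
    have hqy : 0 < dist q y := by
      rw [dist_pos]
      intro h
      rw [h, hy] at h0
      exact lt_irrefl 0 h0
    exact Real.rpow_le_rpow_of_nonpos hqy (dist_mono_last hy hhoriz h0.le hle) he0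
  rw [phiA, phiA]
  apply mul_le_mul_of_nonneg_left _ hβ.le
  apply add_le_add
  · apply Finset.sum_le_sum
    intro j hj
    apply mul_le_mul_of_nonneg_left _ (mul_nonneg (hP j).le (Real.rpow_nonneg dist_nonneg _))
    apply hmono
    rw [inv_apply_one, hplane i, hplane j]
    ring
  · apply mul_le_mul_of_nonneg_left _ hN
    exact hmono (s i) (hplane i)

end Main

theorem boundary_reception_test {d n : ℕ} (hn : 2 ≤ n)
    (s : Fin n → EuclideanSpace ℝ (Fin (d + 1))) (hs : Function.Injective s)
    (hplane : ∀ j, s j (Fin.last d) = 0)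
    (P : Fin n → ℝ) (hP : ∀ j, 0 < P j)
    (N β α : ℝ) (hN : 0 ≤ N) (hβ : 0 < β) (hα : 1 ≤ α)
    (i : Fin n)
    (C : Set (EuclideanSpace ℝ (Fin (d + 1)))) (hCne : C.Nonempty)
    (hCcomp : IsCompact C) (hCpos : ∀ p ∈ C, 0 < p (Fin.last d)) :
    (frontier C ⊆ recZoneA s P N α β i → C ⊆ recZoneA s P N α β i) ∧
    (frontier C ∩ recZoneA s P N α β i = ∅ → C ∩ recZoneA s P N α β i = ∅) := by
  set c := s i with hc
  have hcC : ∀ p ∈ C, p ≠ c := by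
    intro p hp h
    have := hCpos p hp
    rw [h, hc, hplane i] at this
    exact lt_irrefl 0 this
  have hinvlast : ∀ p : EuclideanSpace ℝ (Fin (d+1)),
      (inversion c 1 p) (Fin.last d) = (1 / dist p c)^2 * p (Fin.last d) := by
    intro p
    rw [inv_apply_one, hc, hplane i, sub_zero, add_zero]
  have hcont : ContinuousOn (inversion c 1) C :=
    ContinuousOn.inversion continuousOn_const continuousOn_const continuousOn_id hcC
  have hC' : IsCompact (inversion c 1 '' C) := hCcomp.image_of_continuousOn hcont
  -- positivity of last coordinate on the image
  have hC'pos : ∀ y ∈ inversion c 1 '' C, 0 < y (Fin.last d) := by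
    rintro y ⟨x, hx, rfl⟩
    rw [hinvlast]
    have hd : 0 < dist x c := dist_pos.2 (hcC x hx)
    have := hCpos x hx
    positivity
  have hfrsub : frontier C ⊆ C := hCcomp.isClosed.frontier_subset
  -- main step: from p ∈ C, get a frontier point x of C with phiA-comparison
  have main : ∀ p ∈ C, ∀ up : Bool, ∃ x ∈ frontier C,
      (if up then phiA s P N α β i (inversion c 1 x) ≤ phiA s P N α β i (inversion c 1 p)
       else phiA s P N α β i (inversion c 1 p) ≤ phiA s P N α β i (inversion c 1 x)) := by
    intro p hp up
    set q := inversion c 1 p with hq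
    have hqC' : q ∈ inversion c 1 '' C := ⟨p, hp, rfl⟩
    have hqpos : 0 < q (Fin.last d) := hC'pos q hqC'
    obtain ⟨y, hyfr, hyhoriz, hycomp⟩ := exists_frontier_vert hC' hqC' up
    have hyC' : y ∈ inversion c 1 '' C := by
      have := hyfr.1
      rwa [hC'.isClosed.closure_eq] at this
    have hypos : 0 < y (Fin.last d) := hC'pos y hyC'
    have hyc : y ≠ c := by
      intro h
      rw [h, hc, hplane i] at hypos
      exact lt_irrefl 0 hypos
    have hxfr : inversion c 1 y ∈ frontier C := frontier_inv hCcomp hcC hyfr hyc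
    refine ⟨inversion c 1 y, hxfr, ?_⟩
    have hyy : inversion c 1 (inversion c 1 y) = y := inversion_inversion c one_ne_zero y
    rw [hyy]
    cases up with
    | true =>
      simp only [if_true]
      apply phiA_antitone s P N β α i hplane hP hN hβ hα hyhoriz hqpos
      first | exact hycomp | simpa using hycomp
    | false =>
      simp only [Bool.false_eq_true, if_false]
      apply phiA_antitone s P N β α i hplane hP hN hβ hα
        (fun k hk => (hyhoriz k hk).symm) hypos
      first | exact hycomp | simpa using hycomp
  constructor
  · -- part (a)
    intro hfr p hp
    obtain ⟨x, hxfr, hcomp⟩ := main p hp false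
    simp only [Bool.false_eq_true, if_false] at hcomp
    have hx : x ∈ recZoneA s P N α β i := hfr hxfr
    have hxC : x ∈ C := hfrsub hxfr
    have hxpos : 0 < x (Fin.last d) := hCpos x hxC
    have hxphi : phiA s P N α β i (inversion c 1 x) ≤ P i :=
      (mem_recZone_iff_phi s P N β α i hn hs hplane hP hN hβ hα hxpos).1 hx
    exact (mem_recZone_iff_phi s P N β α i hn hs hplane hP hN hβ hα (hCpos p hp)).2
      (le_trans hcomp hxphi)
  · -- part (b)
    intro hfr
    rw [Set.eq_empty_iff_forall_notMem]
    rintro p ⟨hpC, hpH⟩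
    obtain ⟨x, hxfr, hcomp⟩ := main p hpC true
    simp only [if_true] at hcomp
    have hxC : x ∈ C := hfrsub hxfr
    have hxpos : 0 < x (Fin.last d) := hCpos x hxC
    have hpphi : phiA s P N α β i (inversion c 1 p) ≤ P i :=
      (mem_recZone_iff_phi s P N β α i hn hs hplane hP hN hβ hα (hCpos p hpC)).1 hpH
    have hxH : x ∈ recZoneA s P N α β i :=
      (mem_recZone_iff_phi s P N β α i hn hs hplane hP hN hβ hα hxpos).2
        (le_trans hcomp hpphi)
    have : x ∈ frontier C ∩ recZoneA s P N α β i := ⟨hxfr, hxH⟩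
    rw [hfr] at this
    exact this
end

section
/- (Collinear networks.) Let s₁,…,s_n ∈ ℝ² be n ≥ 2 pairwise-distinct stations all lying on the x-axis (i.e. s_i = (a_i, 0) for reals a_i), with powers P_i > 0, noise N ≥ 0, threshold β > 0 and path-loss exponent 2. Then for every i, the two-dimensional reception zone H_i ⊆ ℝ² of station s_i is connected. -/
open Finset

noncomputable def sinr2 {d n : ℕ} (s : Fin n → EuclideanSpace ℝ (Fin d))
    (P : Fin n → ℝ) (N : ℝ) (i : Fin n) (p : EuclideanSpace ℝ (Fin d)) : ℝ :=
  (P i / dist p (s i) ^ 2) /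
    ((∑ j ∈ Finset.univ.erase i, P j / dist p (s j) ^ 2) + N)

noncomputable def recZone2 {d n : ℕ} (s : Fin n → EuclideanSpace ℝ (Fin d))
    (P : Fin n → ℝ) (N β : ℝ) (i : Fin n) : Set (EuclideanSpace ℝ (Fin d)) :=
  {p | p ∉ Set.range s ∧ β ≤ sinr2 s P N i p} ∪ {s i}

private lemma dist_sq_eq' (q r : EuclideanSpace ℝ (Fin 2)) :
    dist q r ^ 2 = (q 0 - r 0) ^ 2 + (q 1 - r 1) ^ 2 := by
  rw [EuclideanSpace.dist_eq, Real.sq_sqrt (by positivity)]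
  simp [Fin.sum_univ_two, Real.dist_eq, sq_abs]

theorem collinear_network_zones_connected {n : ℕ} (hn : 2 ≤ n)
    (s : Fin n → EuclideanSpace ℝ (Fin 2)) (hs : Function.Injective s)
    (haxis : ∀ j, s j 1 = 0)
    (P : Fin n → ℝ) (hP : ∀ j, 0 < P j)
    (N β : ℝ) (hN : 0 ≤ N) (hβ : 0 < β)
    (i : Fin n) :
    IsConnected (recZone2 s P N β i) := by
  classical
  have hsiC : s i ∈ recZone2 s P N β i := Or.inr rfl
  refine ⟨⟨s i, hsiC⟩, isPreconnected_of_forall (s i) ?_⟩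
  intro p hp
  rcases eq_or_ne p (s i) with rfl | hpsi
  · exact ⟨({s i} : Set (EuclideanSpace ℝ (Fin 2))), Set.singleton_subset_iff.mpr hsiC,
      rfl, rfl, isPreconnected_singleton⟩
  have hpL : p ∉ Set.range s ∧ β ≤ sinr2 s P N i p := by
    rcases hp with h | h
    · exact h
    · exact absurd h hpsi
  obtain ⟨hpr, hpβ⟩ := hpL
  have hBpos : ∀ j, 0 < dist p (s j) ^ 2 := by
    intro j
    have hne : p ≠ s j := fun h => hpr ⟨j, h.symm⟩
    have : (0:ℝ) < dist p (s j) := dist_pos.mpr hne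
    positivity
  have hApos : ∀ j, j ≠ i → 0 < dist (s i) (s j) ^ 2 := by
    intro j hj
    have hne : s i ≠ s j := fun h => hj (hs h).symm
    have : (0:ℝ) < dist (s i) (s j) := dist_pos.mpr hne
    positivity
  have hAnn : ∀ j, 0 ≤ dist (s i) (s j) ^ 2 := fun j => sq_nonneg _
  have hAi : dist (s i) (s i) ^ 2 = 0 := by simp
  have hBi : dist p (s i) ^ 2 = (p 0 - s i 0) ^ 2 + p 1 ^ 2 := by
    rw [dist_sq_eq', haxis i]; ring
  -- the path
  set σ : ℝ := if p 1 < 0 then -1 else 1 with hσ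
  have hσsq : σ ^ 2 = 1 := by
    rcases lt_or_ge (p 1) 0 with h | h
    · rw [hσ, if_pos h]; norm_num
    · rw [hσ, if_neg (not_lt.mpr h)]; norm_num
  set yarg : ℝ → ℝ := fun τ => τ * dist p (s i) ^ 2 - τ ^ 2 * (p 0 - s i 0) ^ 2 with hyarg
  have hyargnn : ∀ τ ∈ Set.Icc (0:ℝ) 1, 0 ≤ yarg τ := by
    intro τ hτ
    obtain ⟨h0, h1⟩ := hτ
    have he : yarg τ = τ * (1 - τ) * (p 0 - s i 0) ^ 2 + τ * p 1 ^ 2 := by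
      rw [hyarg]; simp only; rw [hBi]; ring
    rw [he]
    have h2 : 0 ≤ τ * (1 - τ) * (p 0 - s i 0) ^ 2 :=
      mul_nonneg (mul_nonneg h0 (by linarith)) (sq_nonneg _)
    have h3 : 0 ≤ τ * p 1 ^ 2 := mul_nonneg h0 (sq_nonneg _)
    linarith
  set γ : ℝ → EuclideanSpace ℝ (Fin 2) :=
    fun τ => (EuclideanSpace.equiv (Fin 2) ℝ).symm
      (fun k => if k = 0 then s i 0 + τ * (p 0 - s i 0) else σ * Real.sqrt (yarg τ)) with hγ
  have hγ0 : ∀ τ, γ τ 0 = s i 0 + τ * (p 0 - s i 0) := fun τ => rfl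
  have hγ1 : ∀ τ, γ τ 1 = σ * Real.sqrt (yarg τ) := by
    intro τ
    show (if (1 : Fin 2) = 0 then s i 0 + τ * (p 0 - s i 0) else σ * Real.sqrt (yarg τ))
      = σ * Real.sqrt (yarg τ)
    rw [if_neg (by decide : ¬ (1 : Fin 2) = 0)]
  -- distance formula along the path
  have hD : ∀ τ ∈ Set.Icc (0:ℝ) 1, ∀ j, dist (γ τ) (s j) ^ 2
      = (1 - τ) * dist (s i) (s j) ^ 2 + τ * dist p (s j) ^ 2 := by
    intro τ hτ j
    have hy2 : (σ * Real.sqrt (yarg τ)) ^ 2 = yarg τ := by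
      rw [mul_pow, hσsq, one_mul, Real.sq_sqrt (hyargnn τ hτ)]
    rw [dist_sq_eq' (γ τ) (s j), hγ0, hγ1, haxis j, sub_zero, hy2,
      dist_sq_eq' (s i) (s j), dist_sq_eq' p (s j), haxis i, haxis j, hyarg]
    simp only
    rw [hBi]
    ring
  -- endpoints
  have hγzero : γ 0 = s i := by
    have h := hD 0 (by norm_num) i
    rw [hAi] at h
    have h0 : dist (γ 0) (s i) ^ 2 = 0 := by rw [h]; ring
    have : dist (γ 0) (s i) = 0 := by
      nlinarith [dist_nonneg (x := γ 0) (y := s i)]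
    exact dist_eq_zero.mp this
  have hγone : γ 1 = p := by
    ext k
    fin_cases k
    · show γ 1 0 = p 0
      rw [hγ0]; ring
    · show γ 1 1 = p 1
      rw [hγ1]
      have he : yarg 1 = p 1 ^ 2 := by rw [hyarg]; simp only; rw [hBi]; ring
      rw [he, Real.sqrt_sq_eq_abs]
      rcases lt_or_ge (p 1) 0 with h | h
      · rw [abs_of_neg h, hσ, if_pos h]; ring
      · rw [abs_of_nonneg h, hσ, if_neg (not_lt.mpr h), one_mul]
  -- positivity of distances along the path for τ > 0
  have hDpos : ∀ τ, 0 < τ → τ ≤ 1 → ∀ j,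
      0 < (1 - τ) * dist (s i) (s j) ^ 2 + τ * dist p (s j) ^ 2 := by
    intro τ h0 h1 j
    have h1' : 0 ≤ (1 - τ) * dist (s i) (s j) ^ 2 :=
      mul_nonneg (by linarith) (hAnn j)
    have h2 : 0 < τ * dist p (s j) ^ 2 := mul_pos h0 (hBpos j)
    linarith
  have hcard : 1 < Fintype.card (Fin n) := by rw [Fintype.card_fin]; omega
  -- the hypothesis inequality in product form
  have hdenp : 0 < (∑ j ∈ Finset.univ.erase i, P j / dist p (s j) ^ 2) + N := by
    obtain ⟨j, hj⟩ := Fintype.exists_ne_of_one_lt_card hcard i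
    have hsum : 0 < ∑ j ∈ Finset.univ.erase i, P j / dist p (s j) ^ 2 := by
      apply Finset.sum_pos
      · intro k hk
        exact div_pos (hP k) (hBpos k)
      · exact ⟨j, Finset.mem_erase.mpr ⟨hj, Finset.mem_univ j⟩⟩
    linarith
  have hkey : β * ((∑ j ∈ Finset.univ.erase i, P j / dist p (s j) ^ 2) + N)
      * dist p (s i) ^ 2 ≤ P i := by
    simp only [sinr2] at hpβ
    have h1 := (le_div_iff₀ hdenp).mp hpβ
    exact (le_div_iff₀ (hBpos i)).mp h1
  -- membership of the path in the zone
  have hmem : ∀ τ ∈ Set.Icc (0:ℝ) 1, γ τ ∈ recZone2 s P N β i := by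
    intro τ hτ
    rcases eq_or_lt_of_le hτ.1 with rfl | hτpos
    · rw [hγzero]; exact hsiC
    left
    have hDq := hD τ hτ
    have hDqpos : ∀ j, 0 < dist (γ τ) (s j) ^ 2 := by
      intro j; rw [hDq j]; exact hDpos τ hτpos hτ.2 j
    constructor
    · rintro ⟨j, hj⟩
      have h := hDqpos j
      rw [hj] at h
      simp at h
    · simp only [sinr2]
      have hden : 0 < (∑ j ∈ Finset.univ.erase i, P j / dist (γ τ) (s j) ^ 2) + N := by
        obtain ⟨j, hj⟩ := Fintype.exists_ne_of_one_lt_card hcard i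
        have hsum : 0 < ∑ j ∈ Finset.univ.erase i, P j / dist (γ τ) (s j) ^ 2 := by
          apply Finset.sum_pos
          · intro k hk; exact div_pos (hP k) (hDqpos k)
          · exact ⟨j, Finset.mem_erase.mpr ⟨hj, Finset.mem_univ j⟩⟩
        linarith
      rw [le_div_iff₀ hden, le_div_iff₀ (hDqpos i)]
      have hDqi : dist (γ τ) (s i) ^ 2 = τ * dist p (s i) ^ 2 := by
        rw [hDq i, hAi]; ring
      rw [hDqi]
      have hterm : ∀ j ∈ Finset.univ.erase i,
          (P j / dist (γ τ) (s j) ^ 2) * (τ * dist p (s i) ^ 2)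
            ≤ (P j / dist p (s j) ^ 2) * dist p (s i) ^ 2 := by
        intro j hj
        have hjne : j ≠ i := (Finset.mem_erase.mp hj).1
        rw [hDq j, div_mul_eq_mul_div, div_mul_eq_mul_div,
          div_le_div_iff₀ (hDpos τ hτpos hτ.2 j) (hBpos j)]
        have hAjpos := hApos j hjne
        have hBjpos := hBpos j
        have hBipos := hBpos i
        have hPj := hP j
        nlinarith [mul_nonneg (mul_nonneg (le_of_lt hPj) (le_of_lt hBipos))
          (mul_nonneg (by linarith [hτ.2] : (0:ℝ) ≤ 1 - τ) (le_of_lt hAjpos))]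
      have hsum' : (∑ j ∈ Finset.univ.erase i, P j / dist (γ τ) (s j) ^ 2)
            * (τ * dist p (s i) ^ 2)
          ≤ (∑ j ∈ Finset.univ.erase i, P j / dist p (s j) ^ 2) * dist p (s i) ^ 2 := by
        rw [Finset.sum_mul, Finset.sum_mul]
        exact Finset.sum_le_sum hterm
      have hNpart : N * (τ * dist p (s i) ^ 2) ≤ N * dist p (s i) ^ 2 := by
        nlinarith [mul_nonneg (mul_nonneg hN (le_of_lt (hBpos i)))
          (by linarith [hτ.2] : (0:ℝ) ≤ 1 - τ)]
      have hmain : ((∑ j ∈ Finset.univ.erase i, P j / dist (γ τ) (s j) ^ 2) + N)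
            * (τ * dist p (s i) ^ 2)
          ≤ ((∑ j ∈ Finset.univ.erase i, P j / dist p (s j) ^ 2) + N)
            * dist p (s i) ^ 2 := by
        rw [add_mul, add_mul]; exact add_le_add hsum' hNpart
      calc β * ((∑ j ∈ Finset.univ.erase i, P j / dist (γ τ) (s j) ^ 2) + N)
            * (τ * dist p (s i) ^ 2)
          = β * (((∑ j ∈ Finset.univ.erase i, P j / dist (γ τ) (s j) ^ 2) + N)
            * (τ * dist p (s i) ^ 2)) := by ring
        _ ≤ β * (((∑ j ∈ Finset.univ.erase i, P j / dist p (s j) ^ 2) + N)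
            * dist p (s i) ^ 2) := mul_le_mul_of_nonneg_left hmain (le_of_lt hβ)
        _ = β * ((∑ j ∈ Finset.univ.erase i, P j / dist p (s j) ^ 2) + N)
            * dist p (s i) ^ 2 := by ring
        _ ≤ P i := hkey
  -- continuity and conclusion
  have hcont : Continuous γ := by
    rw [hγ]
    apply (EuclideanSpace.equiv (Fin 2) ℝ).symm.continuous.comp
    apply continuous_pi
    intro k
    split_ifs
    · fun_prop
    · apply Continuous.mul continuous_const
      apply Real.continuous_sqrt.comp
      fun_prop
  refine ⟨γ '' Set.Icc 0 1, ?_, ?_, ?_, ?_⟩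
  · rintro q ⟨τ, hτ, rfl⟩
    exact hmem τ hτ
  · exact ⟨0, by norm_num, hγzero⟩
  · exact ⟨1, by norm_num, hγone⟩
  · exact ((isConnected_Icc zero_le_one).image γ hcont.continuousOn).isPreconnected
end

section
/- (Lipschitz-type stability of the SINR ratio.) Consider a wireless network in ℝ² with n ≥ 2 stations s₁,…,s_n, powers P_i > 0, noise N ≥ 0, threshold β > 0 and path-loss exponent α > 0. Let ρ > 0 and 0 < η < 1, and let p, p̃ ∈ ℝ² be points with ‖p − s_i‖ ≥ ρ for every i and ‖p̃ − p‖ ≤ η·ρ. If SINR(s₁, p) = β̂, then ((1−η)/(1+η))^α · β̂ ≤ SINR(s₁, p̃) ≤ ((1+η)/(1−η))^α · β̂. -/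
open Finset

/-- SINR of station `i` at point `p`, for stations `s` in the plane, powers `P`,
noise `N` and path-loss exponent `α`. -/
noncomputable def sinr {n : ℕ} (s : Fin n → EuclideanSpace ℝ (Fin 2))
    (P : Fin n → ℝ) (N α : ℝ) (i : Fin n) (p : EuclideanSpace ℝ (Fin 2)) : ℝ :=
  P i * dist p (s i) ^ (-α) /
    ((∑ j ∈ Finset.univ.erase i, P j * dist p (s j) ^ (-α)) + N)

theorem sinr_stability {n : ℕ} (hn : 2 ≤ n)
    (s : Fin n → EuclideanSpace ℝ (Fin 2)) (hs : Function.Injective s)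
    (P : Fin n → ℝ) (hP : ∀ j, 0 < P j)
    (N β α : ℝ) (hN : 0 ≤ N) (hβ : 0 < β) (hα : 0 < α)
    (ρ η : ℝ) (hρ : 0 < ρ) (hη0 : 0 < η) (hη1 : η < 1)
    (i : Fin n) (p p' : EuclideanSpace ℝ (Fin 2))
    (hsep : ∀ j, ρ ≤ dist p (s j)) (hclose : dist p' p ≤ η * ρ)
    (β' : ℝ) (hβ' : sinr s P N α i p = β') :
    ((1 - η) / (1 + η)) ^ α * β' ≤ sinr s P N α i p' ∧
    sinr s P N α i p' ≤ ((1 + η) / (1 - η)) ^ α * β' := by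
  subst hβ'
  have hc₁0 : (0:ℝ) < 1 - η := by linarith
  have hc₂0 : (0:ℝ) < 1 + η := by linarith
  have hd : ∀ j, 0 < dist p (s j) := fun j => lt_of_lt_of_le hρ (hsep j)
  have hlow : ∀ j, (1 - η) * dist p (s j) ≤ dist p' (s j) := by
    intro j
    have h1 : dist p (s j) ≤ dist p p' + dist p' (s j) := dist_triangle _ _ _
    have h2 : dist p p' = dist p' p := dist_comm _ _
    nlinarith [mul_le_mul_of_nonneg_left (hsep j) hη0.le]
  have hhigh : ∀ j, dist p' (s j) ≤ (1 + η) * dist p (s j) := by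
    intro j
    have h1 : dist p' (s j) ≤ dist p' p + dist p (s j) := dist_triangle _ _ _
    nlinarith [mul_le_mul_of_nonneg_left (hsep j) hη0.le]
  have hd' : ∀ j, 0 < dist p' (s j) := fun j =>
    lt_of_lt_of_le (mul_pos hc₁0 (hd j)) (hlow j)
  set k₁ := (1 - η) ^ (-α) with hk₁def
  set k₂ := (1 + η) ^ (-α) with hk₂def
  have hk₁0 : 0 < k₁ := Real.rpow_pos_of_pos hc₁0 _
  have hk₂0 : 0 < k₂ := Real.rpow_pos_of_pos hc₂0 _
  have hk₁1 : 1 ≤ k₁ := le_of_lt <|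
    Real.one_lt_rpow_of_pos_of_lt_one_of_neg hc₁0 (by linarith) (by linarith)
  have hk₂1 : k₂ ≤ 1 := Real.rpow_le_one_of_one_le_of_nonpos (by linarith) (by linarith)
  -- pointwise bounds on the rpow terms
  have hterm_hi : ∀ j, dist p' (s j) ^ (-α) ≤ k₁ * dist p (s j) ^ (-α) := by
    intro j
    have := Real.rpow_le_rpow_of_nonpos (mul_pos hc₁0 (hd j))
      (hlow j) (by linarith : -α ≤ 0)
    rwa [Real.mul_rpow hc₁0.le (hd j).le] at this
  have hterm_lo : ∀ j, k₂ * dist p (s j) ^ (-α) ≤ dist p' (s j) ^ (-α) := by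
    intro j
    have := Real.rpow_le_rpow_of_nonpos (hd' j) (hhigh j) (by linarith : -α ≤ 0)
    rwa [Real.mul_rpow hc₂0.le (hd j).le] at this
  -- abbreviations
  set A := P i * dist p (s i) ^ (-α) with hA
  set A' := P i * dist p' (s i) ^ (-α) with hA'
  set S := ∑ j ∈ Finset.univ.erase i, P j * dist p (s j) ^ (-α) with hS
  set S' := ∑ j ∈ Finset.univ.erase i, P j * dist p' (s j) ^ (-α) with hS'
  have hA0 : 0 < A := mul_pos (hP i) (Real.rpow_pos_of_pos (hd i) _)
  have hA'0 : 0 < A' := mul_pos (hP i) (Real.rpow_pos_of_pos (hd' i) _)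
  have hSpos : 0 < S := by
    apply Finset.sum_pos
    · intro j _
      exact mul_pos (hP j) (Real.rpow_pos_of_pos (hd j) _)
    · have : Nontrivial (Fin n) := Fin.nontrivial_iff_two_le.mpr hn
      obtain ⟨j, hj⟩ := exists_ne i
      exact ⟨j, Finset.mem_erase.2 ⟨hj, Finset.mem_univ j⟩⟩
  have hS'pos : 0 < S' := by
    apply Finset.sum_pos
    · intro j _
      exact mul_pos (hP j) (Real.rpow_pos_of_pos (hd' j) _)
    · have : Nontrivial (Fin n) := Fin.nontrivial_iff_two_le.mpr hn
      obtain ⟨j, hj⟩ := exists_ne i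
      exact ⟨j, Finset.mem_erase.2 ⟨hj, Finset.mem_univ j⟩⟩
  have hB0 : 0 < S + N := by linarith
  have hB'0 : 0 < S' + N := by linarith
  -- bounds on numerators
  have hAhi : A' ≤ k₁ * A := by
    rw [hA', hA, mul_left_comm]
    exact mul_le_mul_of_nonneg_left (hterm_hi i) (hP i).le
  have hAlo : k₂ * A ≤ A' := by
    rw [hA', hA, mul_left_comm]
    exact mul_le_mul_of_nonneg_left (hterm_lo i) (hP i).le
  -- bounds on sums
  have hShi : S' ≤ k₁ * S := by
    rw [hS', hS, Finset.mul_sum]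
    apply Finset.sum_le_sum
    intro j _
    rw [mul_left_comm]
    exact mul_le_mul_of_nonneg_left (hterm_hi j) (hP j).le
  have hSlo : k₂ * S ≤ S' := by
    rw [hS', hS, Finset.mul_sum]
    apply Finset.sum_le_sum
    intro j _
    rw [mul_left_comm]
    exact mul_le_mul_of_nonneg_left (hterm_lo j) (hP j).le
  have hBhi : S' + N ≤ k₁ * (S + N) := by nlinarith
  have hBlo : k₂ * (S + N) ≤ S' + N := by nlinarith
  -- express the ratio constants
  have hkdiv₁ : ((1 - η) / (1 + η)) ^ α = k₂ / k₁ := by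
    rw [Real.div_rpow hc₁0.le hc₂0.le, hk₁def, hk₂def,
      Real.rpow_neg hc₁0.le, Real.rpow_neg hc₂0.le]
    field_simp
  have hkdiv₂ : ((1 + η) / (1 - η)) ^ α = k₁ / k₂ := by
    rw [Real.div_rpow hc₂0.le hc₁0.le, hk₁def, hk₂def,
      Real.rpow_neg hc₁0.le, Real.rpow_neg hc₂0.le]
    field_simp
  have hsinr : sinr s P N α i p = A / (S + N) := rfl
  have hsinr' : sinr s P N α i p' = A' / (S' + N) := rfl
  rw [hsinr, hsinr', hkdiv₁, hkdiv₂]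
  constructor
  · rw [div_mul_div_comm, div_le_div_iff₀ (mul_pos hk₁0 hB0) hB'0]
    exact mul_le_mul hAlo hBhi hB'0.le hA'0.le
  · rw [div_mul_div_comm, div_le_div_iff₀ hB'0 (mul_pos hk₂0 hB0)]
    exact mul_le_mul hAhi hBlo (mul_pos hk₂0 hB0).le (mul_pos hk₁0 hA0).le
end
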